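/- Let n ≥ d ≥ 1 and let τ₁, …, τₙ ∈ ℂ^d be arbitrary (not necessarily unit) vectors. Then for every m ≥ 1, Σⱼ Σₖ |⟨τⱼ,τₖ⟩|^{2m} ≥ (1/C(d+m−1,m)) · (Σⱼ ‖τⱼ‖^{2m})². -/

import Mathlib

/-!
For `m = 1` this is the frame-potential bound: with `V` the matrix whose rows are the vectors,
`∑ ‖τⱼ‖²` is the trace of `VᴴV`, while `∑ |⟨τⱼ,τₖ⟩|²` is the Frobenius norm squared of the Gram
matrix `VVᴴ`, which equals that of `VᴴV` since `tr (VᴴVVᴴV) = tr (VVᴴVVᴴ)`; Cauchy–Schwarz on the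
diagonal gives `|tr A|² ≤ N · ‖A‖²_F` for an `N × N` matrix `A`. The general case is the case `m = 1` applied to the
symmetric tensor powers `τⱼ^{⊗m}`, which live in a space of dimension `C(d+m−1, m)` and satisfy
`⟨u^{⊗m}, v^{⊗m}⟩ = ⟨u, v⟩^m`.
-/

open Finset Matrix ComplexConjugate

variable {𝕜 : Type*} [RCLike 𝕜]

namespace Matrix

variable {m n : Type*} [Fintype m] [Fintype n]

theorem trace_mul_conjTranspose_self_eq_sum_norm_sq (A : Matrix m n 𝕜) :
    (A * Aᴴ).trace = ((∑ i, ∑ j, ‖A i j‖ ^ 2 : ℝ) : 𝕜) := by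
  simp [trace, mul_apply, RCLike.mul_conj]

theorem sum_norm_sq_conjTranspose_mul_self (A : Matrix m n 𝕜) :
    ∑ j, ∑ k, ‖(Aᴴ * A) j k‖ ^ 2 = ∑ i, ∑ i', ‖(A * Aᴴ) i i'‖ ^ 2 := by
  have h := trace_mul_comm Aᴴ (A * Aᴴ * A)
  rw [← RCLike.ofReal_inj (K := 𝕜), ← trace_mul_conjTranspose_self_eq_sum_norm_sq,
    ← trace_mul_conjTranspose_self_eq_sum_norm_sq]
  simpa only [conjTranspose_mul, conjTranspose_conjTranspose, Matrix.mul_assoc] using h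

theorem norm_trace_sq_le_card_mul_sum_norm_sq (A : Matrix n n 𝕜) :
    ‖A.trace‖ ^ 2 ≤ Fintype.card n * ∑ i, ∑ j, ‖A i j‖ ^ 2 := by
  calc ‖A.trace‖ ^ 2 ≤ (∑ i, ‖A i i‖) ^ 2 := by
        gcongr; exact norm_sum_le _ _
    _ ≤ Fintype.card n * ∑ i, ‖A i i‖ ^ 2 := sq_sum_le_card_mul_sum_sq
    _ ≤ Fintype.card n * ∑ i, ∑ j, ‖A i j‖ ^ 2 := by
        gcongr with i
        exact single_le_sum (f := fun j => ‖A i j‖ ^ 2) (fun _ _ => by positivity) (mem_univ i)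

end Matrix

theorem sq_sum_norm_sq_le_card_mul_sum_norm_inner_sq {ι S : Type*} [Fintype ι] [Fintype S]
    (v : ι → EuclideanSpace 𝕜 S) :
    (∑ j, ‖v j‖ ^ 2) ^ 2 ≤ Fintype.card S * ∑ j, ∑ k, ‖inner 𝕜 (v j) (v k)‖ ^ 2 := by
  set V : Matrix ι S 𝕜 := Matrix.of fun j s => v j s
  have htrace : (Vᴴ * V).trace = ((∑ j, ‖v j‖ ^ 2 : ℝ) : 𝕜) := by
    rw [trace_mul_comm, trace_mul_conjTranspose_self_eq_sum_norm_sq]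
    simp [V, EuclideanSpace.norm_sq_eq]
  have hgram : ∀ j k, ‖(V * Vᴴ) j k‖ = ‖inner 𝕜 (v j) (v k)‖ := by
    intro j k
    rw [norm_inner_symm, EuclideanSpace.inner_eq_star_dotProduct]
    simp [V, mul_apply, dotProduct]
  calc (∑ j, ‖v j‖ ^ 2) ^ 2 = ‖(Vᴴ * V).trace‖ ^ 2 := by
        rw [htrace, RCLike.norm_ofReal, sq_abs]
    _ ≤ Fintype.card S * ∑ s, ∑ t, ‖(Vᴴ * V) s t‖ ^ 2 := norm_trace_sq_le_card_mul_sum_norm_sq _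
    _ = Fintype.card S * ∑ j, ∑ k, ‖inner 𝕜 (v j) (v k)‖ ^ 2 := by
        simp only [sum_norm_sq_conjTranspose_mul_self, hgram]

section Veronese

variable {ι : Type*} [Fintype ι] [DecidableEq ι]

/-- `v^{⊗m}` in the orthonormal basis of the symmetric power indexed by multisets `k`; the weight
`√(countPerms k)` makes `inner_veronese` the multinomial theorem. -/
noncomputable def veronese (m : ℕ) (v : EuclideanSpace 𝕜 ι) : EuclideanSpace 𝕜 (Sym ι m) :=
  WithLp.toLp 2 fun k => (√(k.1.countPerms : ℝ) : 𝕜) * (k.1.map v).prod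

theorem inner_veronese (m : ℕ) (u v : EuclideanSpace 𝕜 ι) :
    inner 𝕜 (veronese m u) (veronese m v) = inner 𝕜 u v ^ m := by
  have hterm : ∀ k : Sym ι m, veronese m v k * conj (veronese m u k) =
      k.1.countPerms * (k.1.map fun i => v i * conj (u i)).prod := by
    intro k
    simp only [veronese, map_mul, RCLike.conj_ofReal, map_multiset_prod, Multiset.map_map,
      Multiset.prod_map_mul, Function.comp_def]
    rw [mul_mul_mul_comm, ← RCLike.ofReal_mul, Real.mul_self_sqrt (Nat.cast_nonneg _),
      RCLike.ofReal_natCast]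
  simp only [PiLp.inner_apply, RCLike.inner_apply, hterm]
  rw [sum_pow, sym_univ]

theorem norm_veronese (m : ℕ) (v : EuclideanSpace 𝕜 ι) : ‖veronese m v‖ = ‖v‖ ^ m := by
  have h : (‖veronese m v‖ : 𝕜) ^ 2 = ((‖v‖ ^ m : ℝ) : 𝕜) ^ 2 := by
    rw [← inner_self_eq_norm_sq_to_K, inner_veronese, inner_self_eq_norm_sq_to_K]
    push_cast; ring
  exact (pow_left_inj₀ (norm_nonneg _) (by positivity) two_ne_zero).1 (mod_cast h)

end Veronese

theorem welch_bound_nonnormalized_general (d n : ℕ)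
    (τ : Fin n → EuclideanSpace ℂ (Fin d)) (m : ℕ) :
    (1 / ((d + m - 1).choose m : ℝ)) * (∑ j, ‖τ j‖ ^ (2 * m)) ^ 2 ≤
      ∑ j, ∑ k, ‖(inner ℂ (τ j) (τ k) : ℂ)‖ ^ (2 * m) := by
  have h := sq_sum_norm_sq_le_card_mul_sum_norm_inner_sq fun j => veronese m (τ j)
  simp only [norm_veronese, inner_veronese, norm_pow, ← pow_mul, Sym.card_sym_eq_choose,
    Fintype.card_fin] at h
  rw [one_div]
  exact inv_mul_le_of_le_mul₀ (Nat.cast_nonneg _) (by positivity)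
    (by simpa only [mul_comm m] using h)

/-- **Welch bound for non-normalized vectors.** For `n ≥ d ≥ 1`, arbitrary vectors
`τ₁,…,τₙ ∈ ℂ^d` and `m ≥ 1`,
`∑ⱼ∑ₖ |⟨τⱼ,τₖ⟩|^(2m) ≥ (1/C(d+m−1,m))·(∑ⱼ ‖τⱼ‖^(2m))²`. -/
theorem welch_bound_nonnormalized (d n : ℕ) (hd : 1 ≤ d) (hdn : d ≤ n)
    (τ : Fin n → EuclideanSpace ℂ (Fin d)) (m : ℕ) (hm : 1 ≤ m) :
    (1 / ((d + m - 1).choose m : ℝ)) * (∑ j, ‖τ j‖ ^ (2 * m)) ^ 2 ≤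
      ∑ j, ∑ k, ‖(inner ℂ (τ j) (τ k) : ℂ)‖ ^ (2 * m) :=
  welch_bound_nonnormalized_general d n τ m
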